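/- There exist complex roots β₁, β₂, β₃, β₄ of P₃(T) = T⁸ − T⁷ + 2T⁶ − 4T⁵ − 2T⁴ − 12T³ + 18T² − 27T + 81, pairwise distinct and each with strictly positive imaginary part, satisfying the nontrivial multiplicative relation β₁β₃β₄ = −3β₂. -/

import Mathlib

/-
Write `Q(u) = u⁴ - u³ - 10u² + 5u + 4`. Then `P₃(T) = T⁴ Q(T + 3/T)`, so whenever `Q(u) = 0`
the two roots `(u ± i√(12 - u²))/2` of `T² - uT + 3` are roots of `P₃`. By the intermediate
value theorem `Q` has four real roots `u₁ < u₃ < u₂ < u₄` in `(-√12, √12)`, and `βₖ` is the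
corresponding root in the upper half plane.

Over `ℚ(√-7)`, `P₃` factors into two quartics with constant term `-9`. Which factor a root
`β` of `T² - uT + 3` kills is decided by the sign of an imaginary part: reducing the other factor
modulo `T² - uT + 3` leaves `β (Bβ - (6u - 3))` with `B` explicit. This puts `β₁, β₃, β₄` and
`β̄₂ = 3/β₂` on the same factor, and Vieta gives `β₁β₃β₄ · 3/β₂ = -9`.
-/

open Polynomial

/-- The Weil polynomial of the Jacobian of `y² = x⁹ + x⁸ + x⁷ + 2x⁵ + x` over `𝔽₃`. -/
noncomputable def P3 : Polynomial ℂ :=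
  X ^ 8 - X ^ 7 + 2 * X ^ 6 - 4 * X ^ 5 - 2 * X ^ 4 - 12 * X ^ 3 + 18 * X ^ 2 - 27 * X + 81

theorem Polynomial.Monic.neg_one_pow_mul_prod_eq_coeff_zero {R : Type*} [CommRing R] [IsDomain R]
    {p : R[X]} (hp : p.Monic) {s : Finset R} (hs : s.card = p.natDegree)
    (hroot : ∀ r ∈ s, p.IsRoot r) : (-1) ^ p.natDegree * ∏ r ∈ s, r = p.coeff 0 := by
  have hroots : s.val = p.roots :=
    Multiset.eq_of_le_of_card_le
      ((Multiset.le_iff_subset s.nodup).2 fun r hr => (mem_roots hp.ne_zero).2 (hroot r hr))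
      (by simpa [hs] using card_roots' p)
  rw [(splits_iff_card_roots.2 (by rw [← hroots]; exact hs)).coeff_zero_eq_prod_roots_of_monic hp,
    ← hroots, Finset.prod_val]
  rfl

open Complex ComplexConjugate

def traceQuartic {R : Type*} [CommRing R] (u : R) : R := u ^ 4 - u ^ 3 - 10 * u ^ 2 + 5 * u + 4

theorem map_traceQuartic {R S : Type*} [CommRing R] [CommRing S] (f : R →+* S) (u : R) :
    f (traceQuartic u) = traceQuartic (f u) := by
  simp [traceQuartic, map_ofNat]

theorem P3_eval_eq_zero_of_sq_eq {z u : ℂ} (hz : z ^ 2 = u * z - 3) (hu : traceQuartic u = 0) :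
    P3.eval z = 0 := by
  unfold traceQuartic at hu
  simp only [P3, eval_add, eval_sub, eval_mul, eval_pow, eval_X, eval_ofNat]
  linear_combination (z ^ 6 + (u - 1) * z ^ 5 + (u ^ 2 - u - 1) * z ^ 4
    + (u ^ 3 - u ^ 2 - 4 * u - 1) * z ^ 3 + (3 * u ^ 2 - 3 * u - 3) * z ^ 2
    + (9 * u - 9) * z + 27) * hz + z ^ 4 * hu

theorem Complex.sq_eq_two_re_mul_sub_normSq (z : ℂ) : z ^ 2 = 2 * z.re * z - normSq z := by
  have h := add_conj z
  push_cast at h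
  linear_combination z * h - mul_conj z

theorem sq_eq_of_normSq_eq_three {z : ℂ} (hz : normSq z = 3) : z ^ 2 = 2 * z.re * z - 3 := by
  rw [sq_eq_two_re_mul_sub_normSq, hz, ofReal_ofNat]

theorem P3_eval_eq_zero {z : ℂ} (hz : normSq z = 3) (hQ : traceQuartic (2 * z.re) = 0) :
    P3.eval z = 0 :=
  P3_eval_eq_zero_of_sq_eq (sq_eq_of_normSq_eq_three hz)
    (by simpa [map_traceQuartic] using congrArg ofRealHom hQ)

noncomputable def sqrtNegSeven : ℂ := ⟨0, √7⟩

theorem sqrtNegSeven_sq : sqrtNegSeven ^ 2 = -7 := by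
  apply Complex.ext <;> simp [sqrtNegSeven, sq]

noncomputable def quarticFactor (d : ℂ) : ℂ[X] :=
  X ^ 4 - C ((1 + d) / 2) * X ^ 3 + C d * X ^ 2 + C (3 * (1 - d) / 2) * X - 9

theorem quarticFactor_monic (d : ℂ) : (quarticFactor d).Monic := by
  unfold quarticFactor; monicity!

theorem quarticFactor_natDegree (d : ℂ) : (quarticFactor d).natDegree = 4 := by
  unfold quarticFactor; compute_degree!

theorem quarticFactor_coeff_zero (d : ℂ) : (quarticFactor d).coeff 0 = -9 := by
  simp [quarticFactor]

theorem P3_eval_eq_mul (z : ℂ) : P3.eval z =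
    (quarticFactor sqrtNegSeven).eval z * (quarticFactor (-sqrtNegSeven)).eval z := by
  simp only [P3, quarticFactor, eval_add, eval_sub, eval_mul, eval_pow, eval_X, eval_ofNat, eval_C]
  linear_combination (z ^ 3 / 2 - z ^ 2 + 3 * z / 2) ^ 2 * sqrtNegSeven_sq

theorem quarticFactor_eval_eq_zero {z : ℂ} (hz : normSq z = 3) (hQ : traceQuartic (2 * z.re) = 0)
    (hsign : z.re * ((4 * z.re - 1) * z.im + √7 * (z.re - 1)) ≠ 0) :
    (quarticFactor sqrtNegSeven).eval z = 0 := by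
  have hP3 := P3_eval_eq_zero hz hQ
  rw [P3_eval_eq_mul] at hP3
  refine (mul_eq_zero.1 hP3).resolve_right ?_
  set u : ℂ := 2 * z.re
  set B : ℂ := u ^ 2 - u / 2 + sqrtNegSeven * (u - 2) / 2
  have hred : (quarticFactor (-sqrtNegSeven)).eval z = z * (B * z - (6 * u - 3)) := by
    simp only [quarticFactor, eval_add, eval_sub, eval_mul, eval_pow, eval_X, eval_ofNat, eval_C]
    linear_combination
      (z ^ 2 + (u - 1 / 2 + sqrtNegSeven / 2) * z - 3) * sq_eq_of_normSq_eq_three hz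
  have him : (B * z - (6 * u - 3)).im = z.re * ((4 * z.re - 1) * z.im + √7 * (z.re - 1)) := by
    simp [B, u, sqrtNegSeven, sq]; ring
  have hz0 : z ≠ 0 := by rintro rfl; simp at hz
  rw [hred]
  exact mul_ne_zero hz0 fun h => hsign (by rw [← him, h, zero_im])

theorem exists_mem_Icc_eq_zero_of_mem_uIcc {f : ℝ → ℝ} (hf : Continuous f) {a b : ℝ}
    (hab : a ≤ b) (h0 : 0 ∈ Set.uIcc (f a) (f b)) : ∃ u ∈ Set.Icc a b, f u = 0 := by
  rw [← Set.uIcc_of_le hab]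
  exact intermediate_value_uIcc hf.continuousOn h0

theorem exists_traceQuartic_roots : ∃ u₁ u₂ u₃ u₄ : ℝ,
    traceQuartic u₁ = 0 ∧ traceQuartic u₂ = 0 ∧ traceQuartic u₃ = 0 ∧ traceQuartic u₄ = 0 ∧
    u₁ ∈ Set.Icc (-3) (-2) ∧ u₂ ∈ Set.Icc (1 / 2) 1 ∧ u₃ ∈ Set.Icc (-1 / 2) (-1 / 4) ∧
    u₄ ∈ Set.Icc 3 (69 / 20) := by
  have hc : Continuous (traceQuartic (R := ℝ)) := by
    unfold traceQuartic; fun_prop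
  obtain ⟨u₁, hu₁, h₁⟩ := exists_mem_Icc_eq_zero_of_mem_uIcc hc (a := -3) (b := -2) (by norm_num)
    (by norm_num [traceQuartic, Set.mem_uIcc])
  obtain ⟨u₂, hu₂, h₂⟩ := exists_mem_Icc_eq_zero_of_mem_uIcc hc (a := 1 / 2) (b := 1) (by norm_num)
    (by norm_num [traceQuartic, Set.mem_uIcc])
  obtain ⟨u₃, hu₃, h₃⟩ := exists_mem_Icc_eq_zero_of_mem_uIcc hc (a := -1 / 2) (b := -1 / 4)
    (by norm_num) (by norm_num [traceQuartic, Set.mem_uIcc])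
  obtain ⟨u₄, hu₄, h₄⟩ := exists_mem_Icc_eq_zero_of_mem_uIcc hc (a := 3) (b := 69 / 20)
    (by norm_num) (by norm_num [traceQuartic, Set.mem_uIcc])
  exact ⟨u₁, u₂, u₃, u₄, h₁, h₂, h₃, h₄, hu₁, hu₂, hu₃, hu₄⟩

noncomputable def ofTrace (u : ℝ) : ℂ := ⟨u / 2, √(12 - u ^ 2) / 2⟩

section ofTrace

variable {u : ℝ}

theorem two_mul_re_ofTrace : 2 * (ofTrace u).re = u := by
  simp [ofTrace]; ring

theorem normSq_ofTrace (hu : u ^ 2 ≤ 12) : normSq (ofTrace u) = 3 := by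
  rw [normSq_apply]
  simp only [ofTrace]
  nlinarith [Real.mul_self_sqrt (sub_nonneg.2 hu)]

theorem im_ofTrace_pos (hu : u ^ 2 < 12) : 0 < (ofTrace u).im := by
  simpa [ofTrace] using hu

theorem P3_eval_ofTrace (hQ : traceQuartic u = 0) (hu : u ^ 2 ≤ 12) : P3.eval (ofTrace u) = 0 :=
  P3_eval_eq_zero (normSq_ofTrace hu) (by rwa [two_mul_re_ofTrace])

theorem quarticFactor_eval_ofTrace (hQ : traceQuartic u = 0) (hu : u < 0 ∨ 2 < u)
    (hu12 : u ^ 2 < 12) : (quarticFactor sqrtNegSeven).eval (ofTrace u) = 0 := by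
  refine quarticFactor_eval_eq_zero (normSq_ofTrace hu12.le) (by rwa [two_mul_re_ofTrace])
    (ne_of_gt ?_)
  have hv := im_ofTrace_pos hu12
  have h7 : 0 < √7 := by positivity
  have h₁ : 0 < (ofTrace u).re * (4 * (ofTrace u).re - 1) := by
    simp only [ofTrace]; rcases hu with hu | hu <;> nlinarith
  have h₂ : 0 < (ofTrace u).re * ((ofTrace u).re - 1) := by
    simp only [ofTrace]; rcases hu with hu | hu <;> nlinarith
  nlinarith [mul_pos h₁ hv, mul_pos h7 h₂]

theorem quarticFactor_eval_conj_ofTrace (hQ : traceQuartic u = 0) (hu₁ : 1 / 2 ≤ u)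
    (hu₂ : u < 2) : (quarticFactor sqrtNegSeven).eval (conj (ofTrace u)) = 0 := by
  have hu12 : u ^ 2 < 12 := by nlinarith
  refine quarticFactor_eval_eq_zero (by rw [normSq_conj, normSq_ofTrace hu12.le])
    (by rwa [conj_re, two_mul_re_ofTrace]) (ne_of_lt ?_)
  have hv := im_ofTrace_pos hu12
  have h7 : 0 < √7 := by positivity
  have h₁ : 0 ≤ (ofTrace u).re * (4 * (ofTrace u).re - 1) := by
    simp only [ofTrace]; nlinarith
  have h₂ : (ofTrace u).re * ((ofTrace u).re - 1) < 0 := by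
    simp only [ofTrace]; nlinarith
  rw [conj_re, conj_im]
  nlinarith [mul_nonneg h₁ hv.le, mul_neg_of_pos_of_neg h7 h₂]

end ofTrace

theorem quarticFactor_prod_roots {d r₁ r₂ r₃ r₄ : ℂ} (h₁ : (quarticFactor d).eval r₁ = 0)
    (h₂ : (quarticFactor d).eval r₂ = 0) (h₃ : (quarticFactor d).eval r₃ = 0)
    (h₄ : (quarticFactor d).eval r₄ = 0) (h₁₂ : r₁ ≠ r₂) (h₁₃ : r₁ ≠ r₃) (h₁₄ : r₁ ≠ r₄)
    (h₂₃ : r₂ ≠ r₃) (h₂₄ : r₂ ≠ r₄) (h₃₄ : r₃ ≠ r₄) : r₁ * r₂ * r₃ * r₄ = -9 := by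
  have h := (quarticFactor_monic d).neg_one_pow_mul_prod_eq_coeff_zero (s := {r₁, r₂, r₃, r₄})
    (by simp [quarticFactor_natDegree, *]) (by simp [IsRoot, *])
  simp [quarticFactor_natDegree, quarticFactor_coeff_zero, *] at h
  linear_combination h

/-- There are pairwise distinct complex roots `β₁, β₂, β₃, β₄` of `P₃`, each with strictly
positive imaginary part, satisfying the nontrivial relation `β₁β₃β₄ = −3β₂`. -/
theorem P3_nontrivial_relation :
    ∃ β₁ β₂ β₃ β₄ : ℂ,
      P3.eval β₁ = 0 ∧ P3.eval β₂ = 0 ∧ P3.eval β₃ = 0 ∧ P3.eval β₄ = 0 ∧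
      β₁ ≠ β₂ ∧ β₁ ≠ β₃ ∧ β₁ ≠ β₄ ∧ β₂ ≠ β₃ ∧ β₂ ≠ β₄ ∧ β₃ ≠ β₄ ∧
      0 < β₁.im ∧ 0 < β₂.im ∧ 0 < β₃.im ∧ 0 < β₄.im ∧
      β₁ * β₃ * β₄ = -3 * β₂ := by
  obtain ⟨u₁, u₂, u₃, u₄, hQ₁, hQ₂, hQ₃, hQ₄, ⟨h₁, h₁'⟩, ⟨h₂, h₂'⟩, ⟨h₃, h₃'⟩, ⟨h₄, h₄'⟩⟩ :=
    exists_traceQuartic_roots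
  have s₁ : u₁ ^ 2 < 12 := by nlinarith
  have s₂ : u₂ ^ 2 < 12 := by nlinarith
  have s₃ : u₃ ^ 2 < 12 := by nlinarith
  have s₄ : u₄ ^ 2 < 12 := by nlinarith
  have ne_of_re_lt {z w : ℂ} (h : z.re < w.re) : z ≠ w := fun e => h.ne (congrArg re e)
  have hprod : ofTrace u₁ * ofTrace u₃ * conj (ofTrace u₂) * ofTrace u₄ = -9 :=
    quarticFactor_prod_roots (quarticFactor_eval_ofTrace hQ₁ (.inl (by linarith)) s₁)
      (quarticFactor_eval_ofTrace hQ₃ (.inl (by linarith)) s₃)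
      (quarticFactor_eval_conj_ofTrace hQ₂ h₂ (by linarith))
      (quarticFactor_eval_ofTrace hQ₄ (.inr (by linarith)) s₄)
      (ne_of_re_lt (by dsimp [ofTrace]; linarith)) (ne_of_re_lt (by simp [ofTrace]; linarith))
      (ne_of_re_lt (by dsimp [ofTrace]; linarith)) (ne_of_re_lt (by simp [ofTrace]; linarith))
      (ne_of_re_lt (by dsimp [ofTrace]; linarith)) (ne_of_re_lt (by simp [ofTrace]; linarith))
  have hnormSq : ofTrace u₂ * conj (ofTrace u₂) = 3 := by
    rw [mul_conj, normSq_ofTrace s₂.le, ofReal_ofNat]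
  have hconj : conj (ofTrace u₂) ≠ 0 := fun h => by simp [h] at hnormSq
  refine ⟨ofTrace u₁, ofTrace u₂, ofTrace u₃, ofTrace u₄, P3_eval_ofTrace hQ₁ s₁.le,
    P3_eval_ofTrace hQ₂ s₂.le, P3_eval_ofTrace hQ₃ s₃.le, P3_eval_ofTrace hQ₄ s₄.le,
    ne_of_re_lt (by dsimp [ofTrace]; linarith), ne_of_re_lt (by dsimp [ofTrace]; linarith),
    ne_of_re_lt (by dsimp [ofTrace]; linarith), (ne_of_re_lt (by dsimp [ofTrace]; linarith)).symm,
    ne_of_re_lt (by dsimp [ofTrace]; linarith), ne_of_re_lt (by dsimp [ofTrace]; linarith),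
    im_ofTrace_pos s₁, im_ofTrace_pos s₂, im_ofTrace_pos s₃, im_ofTrace_pos s₄,
    mul_right_cancel₀ hconj (by linear_combination hprod + 3 * hnormSq)⟩
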